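/- arXiv:1808.01698 — 6 statements merged into one kernel-verified Lean document; each statement's English description precedes it below -/
import Mathlib

section
/- Let Θ₁, Θ₂ be Young functions with Θ₁ ≺ Θ₂ and Θ₁⁻¹ ≲ Θ₂⁻¹, and let θ₁ ∈ G_{θ₁}, θ₂ ∈ G_{θ₂} with θ₂ ≲ θ₁ (∃ C > 0: θ₂(t) ≤ C θ₁(t) for all t > 0). Then M_{θ₂,Θ₂}(ℝⁿ) ⊆ M_{θ₁,Θ₁}(ℝⁿ), and there exists C' > 0 with ‖f‖_{M_{θ₁,Θ₁}} ≤ C'‖f‖_{M_{θ₂,Θ₂}} for all f ∈ M_{θ₂,Θ₂}(ℝⁿ). -/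
open MeasureTheory Metric Set ENNReal

noncomputable section

/-- A Young function: convex, continuous, vanishing at 0, nonnegative, tending to ∞. -/
def IsYoung (Θ : ℝ → ℝ) : Prop :=
  ConvexOn ℝ (Set.Ici 0) Θ ∧ ContinuousOn Θ (Set.Ici 0) ∧ Θ 0 = 0 ∧
  (∀ t, 0 ≤ t → 0 ≤ Θ t) ∧ Filter.Tendsto Θ Filter.atTop Filter.atTop

/-- Generalized inverse Θ⁻¹(s) = inf {r ≥ 0 : Θ r > s}. -/
def invY (Θ : ℝ → ℝ) (s : ℝ) : ℝ := sInf {r : ℝ | 0 ≤ r ∧ s < Θ r}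

abbrev En (n : ℕ) := EuclideanSpace ℝ (Fin n)

/-- Luxemburg norm on a set B. -/
def luxNorm {n : ℕ} (Θ : ℝ → ℝ) (B : Set (En n)) (f : En n → ℝ) : ℝ≥0∞ :=
  sInf {e : ℝ≥0∞ | ∃ b : ℝ, 0 < b ∧ e = ENNReal.ofReal b ∧
    ∫⁻ x in B, ENNReal.ofReal (Θ (|f x| / b)) ∂volume ≤ 1}

/-- Weak Luxemburg quasi-norm on a set B. -/
def wLuxNorm {n : ℕ} (Θ : ℝ → ℝ) (B : Set (En n)) (f : En n → ℝ) : ℝ≥0∞ :=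
  sInf {e : ℝ≥0∞ | ∃ b : ℝ, 0 < b ∧ e = ENNReal.ofReal b ∧
    ∀ t : ℝ, 0 < t → ENNReal.ofReal (Θ t) * volume {x ∈ B | t < |f x| / b} ≤ 1}

/-- Orlicz–Morrey norm (Deringoz–Guliyev–Samko). -/
def morreyNorm (n : ℕ) (θ Θ : ℝ → ℝ) (f : En n → ℝ) : ℝ≥0∞ :=
  ⨆ (a : En n) (r : ℝ) (_ : 0 < r),
    ENNReal.ofReal ((1 / θ ((volume (ball a r)).toReal ^ ((1:ℝ)/n))) *
      invY Θ (1 / (volume (ball a r)).toReal)) * luxNorm Θ (ball a r) f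

/-- Weak Orlicz–Morrey quasi-norm. -/
def wMorreyNorm (n : ℕ) (θ Θ : ℝ → ℝ) (f : En n → ℝ) : ℝ≥0∞ :=
  ⨆ (a : En n) (r : ℝ) (_ : 0 < r),
    ENNReal.ofReal ((1 / θ ((volume (ball a r)).toReal ^ ((1:ℝ)/n))) *
      invY Θ (1 / (volume (ball a r)).toReal)) * wLuxNorm Θ (ball a r) f

/-- The class G_θ : θ positive and decreasing, with t ↦ Θ⁻¹(t^{-n})/θ(t) almost decreasing. -/
def Gclass (n : ℕ) (Θ θ : ℝ → ℝ) : Prop :=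
  (∀ t : ℝ, 0 < t → 0 < θ t) ∧
  (∀ s t : ℝ, 0 < s → s ≤ t → θ t ≤ θ s) ∧
  ∃ C : ℝ, 0 < C ∧ ∀ s t : ℝ, 0 < s → s ≤ t →
    invY Θ (t ^ (-(n:ℝ))) / θ t ≤ C * (invY Θ (s ^ (-(n:ℝ))) / θ s)

/-- Θ₁ ≺ Θ₂. -/
def prec (Θ₁ Θ₂ : ℝ → ℝ) : Prop := ∃ C : ℝ, 0 < C ∧ ∀ t : ℝ, 0 < t → Θ₁ t ≤ Θ₂ (C * t)

/-- Θ₁⁻¹ ≲ Θ₂⁻¹. -/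
def invLesssim (Θ₁ Θ₂ : ℝ → ℝ) : Prop :=
  ∃ C : ℝ, 0 < C ∧ ∀ t : ℝ, 0 < t → invY Θ₁ t ≤ C * invY Θ₂ t

lemma invY_nonneg (Θ : ℝ → ℝ) (s : ℝ) : 0 ≤ invY Θ s :=
  Real.sInf_nonneg fun _ hx => hx.1

lemma luxNorm_le_aux {n : ℕ} (Θ₁ Θ₂ : ℝ → ℝ) (hΘ₁0 : Θ₁ 0 = 0) (hΘ₂0 : Θ₂ 0 = 0)
    (C₀ : ℝ) (hC₀ : 0 < C₀) (hp : ∀ t, 0 < t → Θ₁ t ≤ Θ₂ (C₀ * t))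
    (B : Set (En n)) (f : En n → ℝ) :
    luxNorm Θ₁ B f ≤ ENNReal.ofReal C₀ * luxNorm Θ₂ B f := by
  have hc0 : (ENNReal.ofReal C₀) ≠ 0 := by simp [hC₀, hC₀.le]
  have hct : (ENNReal.ofReal C₀) ≠ ⊤ := ofReal_ne_top
  have key : ∀ b : ℝ, 0 < b →
      (∫⁻ x in B, ENNReal.ofReal (Θ₂ (|f x| / b)) ∂volume ≤ 1) →
      luxNorm Θ₁ B f ≤ ENNReal.ofReal (C₀ * b) := by
    intro b hb hint
    refine sInf_le ⟨C₀ * b, by positivity, rfl, ?_⟩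
    refine le_trans (lintegral_mono fun x => ?_) hint
    apply ENNReal.ofReal_le_ofReal
    rcases eq_or_lt_of_le (abs_nonneg (f x)) with h | h
    · simp [← h, hΘ₁0, hΘ₂0, le_of_eq]
    · have h1 := hp (|f x| / (C₀ * b)) (by positivity)
      have heq : C₀ * (|f x| / (C₀ * b)) = |f x| / b := by
        field_simp
      rwa [heq] at h1
  rw [mul_comm, ← ENNReal.div_le_iff_le_mul (Or.inl hc0) (Or.inl hct)]
  unfold luxNorm
  refine le_sInf ?_
  rintro e ⟨b, hb, rfl, hint⟩
  rw [ENNReal.div_le_iff_le_mul (Or.inl hc0) (Or.inl hct),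
    ← ENNReal.ofReal_mul hb.le, mul_comm b C₀]
  exact key b hb hint

theorem stmt8 (n : ℕ) (hn : 0 < n) (Θ₁ Θ₂ θ₁ θ₂ : ℝ → ℝ)
    (hΘ₁ : IsYoung Θ₁) (hΘ₂ : IsYoung Θ₂)
    (hp : prec Θ₁ Θ₂) (hi : invLesssim Θ₁ Θ₂)
    (hθ₁ : Gclass n Θ₁ θ₁) (hθ₂ : Gclass n Θ₂ θ₂)
    (C : ℝ) (hC : 0 < C) (hθ : ∀ t : ℝ, 0 < t → θ₂ t ≤ C * θ₁ t) :
    ∃ C' : ℝ, 0 < C' ∧ ∀ f : En n → ℝ, Measurable f →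
      (morreyNorm n θ₁ Θ₁ f ≤ ENNReal.ofReal C' * morreyNorm n θ₂ Θ₂ f) ∧
      (morreyNorm n θ₂ Θ₂ f ≠ ⊤ → morreyNorm n θ₁ Θ₁ f ≠ ⊤) := by
  obtain ⟨C₀, hC₀, hp'⟩ := hp
  obtain ⟨C₁, hC₁, hi'⟩ := hi
  refine ⟨C * C₁ * C₀, by positivity, fun f hf => ?_⟩
  have main : morreyNorm n θ₁ Θ₁ f ≤
      ENNReal.ofReal (C * C₁ * C₀) * morreyNorm n θ₂ Θ₂ f := by
    rw [morreyNorm]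
    refine iSup_le fun a => iSup_le fun r => iSup_le fun hr => ?_
    set v := (volume (ball a r)).toReal with hv_def
    have hv : 0 < v :=
      ENNReal.toReal_pos (measure_ball_pos volume a hr).ne' measure_ball_lt_top.ne
    have hu : 0 < v ^ ((1:ℝ)/n) := Real.rpow_pos_of_pos hv _
    have hw : 0 < 1 / v := by positivity
    have hθ₁u : 0 < θ₁ (v ^ ((1:ℝ)/n)) := hθ₁.1 _ hu
    have hθ₂u : 0 < θ₂ (v ^ ((1:ℝ)/n)) := hθ₂.1 _ hu
    have h1 : 1 / θ₁ (v ^ ((1:ℝ)/n)) ≤ C * (1 / θ₂ (v ^ ((1:ℝ)/n))) := by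
      rw [mul_one_div, div_le_div_iff₀ hθ₁u hθ₂u, one_mul]
      exact hθ _ hu
    have h2 : invY Θ₁ (1 / v) ≤ C₁ * invY Θ₂ (1 / v) := hi' _ hw
    have hcoef : 1 / θ₁ (v ^ ((1:ℝ)/n)) * invY Θ₁ (1 / v) ≤
        (C * C₁) * (1 / θ₂ (v ^ ((1:ℝ)/n)) * invY Θ₂ (1 / v)) := by
      calc 1 / θ₁ (v ^ ((1:ℝ)/n)) * invY Θ₁ (1 / v)
          ≤ (C * (1 / θ₂ (v ^ ((1:ℝ)/n)))) * (C₁ * invY Θ₂ (1 / v)) :=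
            mul_le_mul h1 h2 (invY_nonneg _ _) (by positivity)
        _ = (C * C₁) * (1 / θ₂ (v ^ ((1:ℝ)/n)) * invY Θ₂ (1 / v)) := by ring
    have hlux : luxNorm Θ₁ (ball a r) f ≤ ENNReal.ofReal C₀ * luxNorm Θ₂ (ball a r) f :=
      luxNorm_le_aux Θ₁ Θ₂ hΘ₁.2.2.1 hΘ₂.2.2.1 C₀ hC₀ hp' _ f
    have hterm2 : ENNReal.ofReal (1 / θ₂ (v ^ ((1:ℝ)/n)) * invY Θ₂ (1 / v)) *
        luxNorm Θ₂ (ball a r) f ≤ morreyNorm n θ₂ Θ₂ f := by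
      rw [morreyNorm]
      exact le_iSup_of_le a (le_iSup_of_le r (le_iSup_of_le hr le_rfl))
    calc ENNReal.ofReal (1 / θ₁ (v ^ ((1:ℝ)/n)) * invY Θ₁ (1 / v)) * luxNorm Θ₁ (ball a r) f
        ≤ (ENNReal.ofReal (C * C₁) *
            ENNReal.ofReal (1 / θ₂ (v ^ ((1:ℝ)/n)) * invY Θ₂ (1 / v))) *
          (ENNReal.ofReal C₀ * luxNorm Θ₂ (ball a r) f) := by
          refine mul_le_mul' ?_ hlux
          rw [← ENNReal.ofReal_mul (by positivity)]
          exact ENNReal.ofReal_le_ofReal hcoef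
      _ = ENNReal.ofReal (C * C₁ * C₀) *
          (ENNReal.ofReal (1 / θ₂ (v ^ ((1:ℝ)/n)) * invY Θ₂ (1 / v)) *
            luxNorm Θ₂ (ball a r) f) := by
          rw [ENNReal.ofReal_mul (by positivity : (0:ℝ) ≤ C * C₁)]
          ring
      _ ≤ ENNReal.ofReal (C * C₁ * C₀) * morreyNorm n θ₂ Θ₂ f :=
          mul_le_mul_right hterm2 _
  exact ⟨main, fun h => ne_top_of_le_ne_top (ENNReal.mul_ne_top ofReal_ne_top h) main⟩
end
end

section
/- Let Θ₁, Θ₂ be Young functions with Θ₁ ≺ Θ₂ and Θ₁⁻¹ ≲ Θ₂⁻¹, and θ₁ ∈ G_{θ₁}, θ₂ ∈ G_{θ₂}. If there exists C > 0 such that ‖f‖_{M_{θ₁,Θ₁}(ℝⁿ)} ≤ C‖f‖_{M_{θ₂,Θ₂}(ℝⁿ)} for all f ∈ M_{θ₂,Θ₂}(ℝⁿ), then θ₂ ≲ θ₁, i.e., there exists C'>0 with θ₂(t) ≤ C'θ₁(t) for all t > 0. -/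
open MeasureTheory Metric Set ENNReal

noncomputable section

lemma young_mono {Θ : ℝ → ℝ} (hΘ : IsYoung Θ) {a b : ℝ} (ha : 0 ≤ a) (hab : a ≤ b) :
    Θ a ≤ Θ b := by
  rcases eq_or_lt_of_le (ha.trans hab) with hb | hb
  · have : a = 0 := le_antisymm (hab.trans hb.symm.le) ha
    simp [this, ← hb]
  · have h1 : (0:ℝ) ∈ Set.Ici (0:ℝ) := Set.self_mem_Ici
    have h2 : b ∈ Set.Ici (0:ℝ) := hb.le
    have hc : 0 ≤ a / b := div_nonneg ha hb.le
    have hc1 : a / b ≤ 1 := div_le_one_of_le₀ hab hb.le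
    have := hΘ.1.2 h1 h2 (by linarith : (0:ℝ) ≤ 1 - a/b) hc (by ring)
    simp only [smul_eq_mul, mul_zero, zero_add] at this
    have hab' : (a / b) * b = a := div_mul_cancel₀ a hb.ne'
    rw [hab'] at this
    have h0 : Θ 0 = 0 := hΘ.2.2.1
    rw [h0, mul_zero, zero_add] at this
    calc Θ a ≤ (a/b) * Θ b := this
    _ ≤ 1 * Θ b := by
        have := hΘ.2.2.2.1 b hb.le
        nlinarith
    _ = Θ b := one_mul _

lemma young_set_nonempty {Θ : ℝ → ℝ} (hΘ : IsYoung Θ) (s : ℝ) :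
    {r : ℝ | 0 ≤ r ∧ s < Θ r}.Nonempty := by
  have := (hΘ.2.2.2.2.eventually_gt_atTop s).and (Filter.eventually_ge_atTop (0:ℝ))
  rcases this.exists with ⟨r, h1, h2⟩
  exact ⟨r, h2, h1⟩

lemma invY_le {Θ : ℝ → ℝ} {s r : ℝ} (hr : 0 ≤ r) (h : s < Θ r) : invY Θ s ≤ r :=
  csInf_le ⟨0, fun x hx => hx.1⟩ ⟨hr, h⟩

lemma le_invY {Θ : ℝ → ℝ} (hΘ : IsYoung Θ) {s c : ℝ} (hc : 0 ≤ c) (h : Θ c ≤ s) :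
    c ≤ invY Θ s := by
  apply le_csInf (young_set_nonempty hΘ s)
  intro r hr
  by_contra hlt
  push_neg at hlt
  exact absurd (young_mono hΘ hr.1 hlt.le) (not_le.mpr (lt_of_le_of_lt h hr.2))

lemma invY_pos {Θ : ℝ → ℝ} (hΘ : IsYoung Θ) {s : ℝ} (hs : 0 < s) : 0 < invY Θ s := by
  have hcont : ContinuousWithinAt Θ (Set.Ici 0) 0 := hΘ.2.1 0 Set.self_mem_Ici
  have h0 : Θ 0 = 0 := hΘ.2.2.1
  have hev : ∀ᶠ x in nhdsWithin 0 (Set.Ici 0), Θ x < s := by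
    apply hcont.eventually_lt continuousWithinAt_const
    rw [h0]; exact hs
  rw [eventually_nhdsWithin_iff] at hev
  rcases Metric.eventually_nhds_iff.mp hev with ⟨ε, hε, hball⟩
  apply lt_of_lt_of_le hε
  apply le_csInf (young_set_nonempty hΘ s)
  intro r hr
  by_contra hlt
  push_neg at hlt
  have : Θ r < s := hball (by rw [Real.dist_eq, sub_zero, abs_of_nonneg hr.1]; exact hlt) hr.1
  exact absurd hr.2 (not_lt.mpr this.le)

lemma theta_invY_le {Θ : ℝ → ℝ} (hΘ : IsYoung Θ) {s : ℝ} (hs : 0 < s) :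
    Θ (invY Θ s) ≤ s := by
  set p := invY Θ s with hp
  by_contra hlt
  push_neg at hlt
  have hppos : 0 < p := invY_pos hΘ hs
  have hcont : ContinuousWithinAt Θ (Set.Ici 0) p := hΘ.2.1 p (invY_nonneg Θ s)
  have hcont' : ContinuousAt Θ p := by
    rw [← continuousWithinAt_iff_continuousAt (Ici_mem_nhds hppos)]
    exact hcont
  have hev : ∀ᶠ x in nhds p, s < Θ x :=
    (continuousAt_const (y := s)).eventually_lt hcont' hlt
  have hev2 : ∀ᶠ x in nhdsWithin p (Set.Iio p), s < Θ x ∧ 0 < x :=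
    Filter.Eventually.filter_mono nhdsWithin_le_nhds (hev.and (eventually_gt_nhds hppos))
  rcases (hev2.and eventually_mem_nhdsWithin).exists with ⟨x, ⟨hsx, hx0⟩, hxp⟩
  exact absurd (invY_le hx0.le hsx) (not_le.mpr hxp)

lemma lux_integral {n : ℕ} {Θ : ℝ → ℝ} (hΘ0 : Θ 0 = 0) (B : Set (En n)) (t b : ℝ) :
    ∫⁻ x in B, ENNReal.ofReal (Θ (|Set.indicator (ball (0:En n) t) (fun _ => (1:ℝ)) x| / b)) ∂volume
    = ENNReal.ofReal (Θ (1/b)) * volume (ball (0:En n) t ∩ B) := by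
  have heq : (fun x => ENNReal.ofReal (Θ (|Set.indicator (ball (0:En n) t) (fun _ => (1:ℝ)) x| / b)))
      = (ball (0:En n) t).indicator (fun _ => ENNReal.ofReal (Θ (1/b))) := by
    funext x
    by_cases hx : x ∈ ball (0:En n) t
    · rw [Set.indicator_of_mem hx, Set.indicator_of_mem hx, abs_one]
    · rw [Set.indicator_of_notMem hx, Set.indicator_of_notMem hx, abs_zero, zero_div, hΘ0,
        ENNReal.ofReal_zero]
  rw [heq, lintegral_indicator measurableSet_ball, setLIntegral_const,
    Measure.restrict_apply measurableSet_ball]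

lemma luxNorm_indicator_le {n : ℕ} {Θ : ℝ → ℝ} (hΘ : IsYoung Θ) (B : Set (En n)) (t m : ℝ)
    (hm : 0 < m) (hvol : volume (ball (0:En n) t ∩ B) ≤ ENNReal.ofReal m) :
    luxNorm Θ B (Set.indicator (ball (0:En n) t) (fun _ => (1:ℝ)))
      ≤ ENNReal.ofReal (1 / invY Θ (1/m)) := by
  set I := invY Θ (1/m) with hI
  have hIpos : 0 < I := invY_pos hΘ (by positivity)
  apply sInf_le
  refine ⟨1/I, by positivity, rfl, ?_⟩
  rw [lux_integral hΘ.2.2.1]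
  have h1 : Θ (1/(1/I)) = Θ I := by rw [one_div_one_div]
  rw [h1]
  calc ENNReal.ofReal (Θ I) * volume (ball (0:En n) t ∩ B)
      ≤ ENNReal.ofReal (1/m) * ENNReal.ofReal m := by
        exact mul_le_mul' (ENNReal.ofReal_le_ofReal (theta_invY_le hΘ (by positivity))) hvol
    _ = ENNReal.ofReal ((1/m) * m) := (ENNReal.ofReal_mul (by positivity)).symm
    _ ≤ 1 := by rw [one_div_mul_cancel hm.ne']; simp

lemma le_luxNorm_indicator {n : ℕ} {Θ : ℝ → ℝ} (hΘ : IsYoung Θ) (t : ℝ)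
    (hvpos : 0 < (volume (ball (0:En n) t)).toReal) :
    ENNReal.ofReal (1 / invY Θ (1/(volume (ball (0:En n) t)).toReal))
      ≤ luxNorm Θ (ball (0:En n) t) (Set.indicator (ball (0:En n) t) (fun _ => (1:ℝ))) := by
  set v := (volume (ball (0:En n) t)).toReal with hv
  apply le_sInf
  rintro e ⟨b, hb, rfl, hint⟩
  rw [lux_integral hΘ.2.2.1, Set.inter_self] at hint
  have hfin : volume (ball (0:En n) t) ≠ ⊤ := measure_ball_lt_top.ne
  rw [← ENNReal.ofReal_toReal hfin, ← hv, ← ENNReal.ofReal_mul (hΘ.2.2.2.1 _ (by positivity))] at hint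
  have hre : Θ (1/b) * v ≤ 1 := by
    by_contra hgt
    push_neg at hgt
    exact absurd hint (not_le.mpr (by rw [← ENNReal.ofReal_one]; exact ENNReal.ofReal_lt_ofReal_iff_of_nonneg (by norm_num) |>.mpr hgt))
  have hre2 : Θ (1/b) ≤ 1/v := by
    rw [le_div_iff₀ hvpos]; exact hre
  have hle : 1/b ≤ invY Θ (1/v) := le_invY hΘ (by positivity) hre2
  apply ENNReal.ofReal_le_ofReal
  rw [div_le_iff₀ (invY_pos hΘ (by positivity))]
  rw [div_le_iff₀ hb] at hle
  linarith [mul_comm b (invY Θ (1/v))]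

lemma rpow_inv_neg {n : ℕ} (hn : 0 < n) {w : ℝ} (hw : 0 < w) :
    (w ^ ((1:ℝ)/n)) ^ (-(n:ℝ)) = 1/w := by
  rw [← Real.rpow_mul hw.le]
  have h : (1:ℝ)/n * (-(n:ℝ)) = -1 := by
    have : (n:ℝ) ≠ 0 := Nat.cast_ne_zero.mpr hn.ne'
    field_simp
  rw [h, Real.rpow_neg_one, one_div]

lemma morrey_lower {n : ℕ} (hn : 0 < n) {Θ θ : ℝ → ℝ} (hΘ : IsYoung Θ) (hθ : Gclass n Θ θ)
    (t : ℝ) (ht : 0 < t) :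
    ENNReal.ofReal (1 / θ ((volume (ball (0:En n) t)).toReal ^ ((1:ℝ)/n)))
      ≤ morreyNorm n θ Θ (Set.indicator (ball (0:En n) t) (fun _ => (1:ℝ))) := by
  set v := (volume (ball (0:En n) t)).toReal with hv
  have hvpos : 0 < v := ENNReal.toReal_pos (measure_ball_pos volume 0 ht).ne' measure_ball_lt_top.ne
  set I := invY Θ (1/v) with hI
  have hIpos : 0 < I := invY_pos hΘ (by positivity)
  have hθpos : 0 < θ (v ^ ((1:ℝ)/n)) := hθ.1 _ (by positivity)
  unfold morreyNorm
  refine le_trans ?_ (le_iSup_of_le (0 : En n) (le_iSup_of_le t (le_iSup_of_le ht (le_refl _))))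
  calc ENNReal.ofReal (1 / θ (v ^ ((1:ℝ)/n)))
      = ENNReal.ofReal ((1 / θ (v ^ ((1:ℝ)/n)) * I) * (1/I)) := by
        congr 1
        field_simp <;> ring
    _ = ENNReal.ofReal (1 / θ (v ^ ((1:ℝ)/n)) * I) * ENNReal.ofReal (1/I) :=
        ENNReal.ofReal_mul (by positivity)
    _ ≤ _ := mul_le_mul' (le_refl _) (le_luxNorm_indicator hΘ t hvpos)

lemma morrey_upper {n : ℕ} (hn : 0 < n) {Θ θ : ℝ → ℝ} (hΘ : IsYoung Θ) (hθ : Gclass n Θ θ)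
    {CG : ℝ} (hCG : 0 < CG) (hG : ∀ s t : ℝ, 0 < s → s ≤ t →
      invY Θ (t ^ (-(n:ℝ))) / θ t ≤ CG * (invY Θ (s ^ (-(n:ℝ))) / θ s))
    (t : ℝ) (ht : 0 < t) :
    morreyNorm n θ Θ (Set.indicator (ball (0:En n) t) (fun _ => (1:ℝ)))
      ≤ ENNReal.ofReal ((max 1 CG) * (1 / θ ((volume (ball (0:En n) t)).toReal ^ ((1:ℝ)/n)))) := by
  set v := (volume (ball (0:En n) t)).toReal with hv
  have hvpos : 0 < v := ENNReal.toReal_pos (measure_ball_pos volume 0 ht).ne' measure_ball_lt_top.ne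
  have hθv : 0 < θ (v ^ ((1:ℝ)/n)) := hθ.1 _ (by positivity)
  apply iSup_le; intro a; apply iSup_le; intro r; apply iSup_le; intro hr
  set w := (volume (ball a r)).toReal with hw
  have hwpos : 0 < w := ENNReal.toReal_pos (measure_ball_pos volume a hr).ne' measure_ball_lt_top.ne
  have hθw : 0 < θ (w ^ ((1:ℝ)/n)) := hθ.1 _ (by positivity)
  have hIw : 0 < invY Θ (1/w) := invY_pos hΘ (by positivity)
  rcases le_total w v with hwv | hvw
  · -- small ball: use m = w
    have hvol : volume (ball (0:En n) t ∩ ball a r) ≤ ENNReal.ofReal w := by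
      rw [hw, ENNReal.ofReal_toReal measure_ball_lt_top.ne]
      exact measure_mono inter_subset_right
    calc _ ≤ ENNReal.ofReal (1 / θ (w ^ ((1:ℝ)/n)) * invY Θ (1/w))
            * ENNReal.ofReal (1 / invY Θ (1/w)) :=
          mul_le_mul' (le_refl _) (luxNorm_indicator_le hΘ _ t w hwpos hvol)
      _ = ENNReal.ofReal ((1 / θ (w ^ ((1:ℝ)/n)) * invY Θ (1/w)) * (1 / invY Θ (1/w))) :=
          (ENNReal.ofReal_mul (by positivity)).symm
      _ ≤ _ := by
          apply ENNReal.ofReal_le_ofReal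
          have h1 : (1 / θ (w ^ ((1:ℝ)/n)) * invY Θ (1/w)) * (1 / invY Θ (1/w))
              = 1 / θ (w ^ ((1:ℝ)/n)) := by field_simp <;> ring
          rw [h1]
          have h2 : θ (v ^ ((1:ℝ)/n)) ≤ θ (w ^ ((1:ℝ)/n)) :=
            hθ.2.1 _ _ (by positivity) (Real.rpow_le_rpow hwpos.le hwv (by positivity))
          calc 1 / θ (w ^ ((1:ℝ)/n)) ≤ 1 / θ (v ^ ((1:ℝ)/n)) := by
                apply one_div_le_one_div_of_le hθv h2
            _ ≤ (max 1 CG) * (1 / θ (v ^ ((1:ℝ)/n))) := by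
                nth_rewrite 1 [← one_mul (1 / θ (v ^ ((1:ℝ)/n)))]
                exact mul_le_mul_of_nonneg_right (le_max_left 1 CG) (by positivity)
  · -- large ball: use m = v and almost-decreasingness
    have hIv : 0 < invY Θ (1/v) := invY_pos hΘ (by positivity)
    have hvol : volume (ball (0:En n) t ∩ ball a r) ≤ ENNReal.ofReal v := by
      rw [hv, ENNReal.ofReal_toReal measure_ball_lt_top.ne]
      exact measure_mono inter_subset_left
    calc _ ≤ ENNReal.ofReal (1 / θ (w ^ ((1:ℝ)/n)) * invY Θ (1/w))
            * ENNReal.ofReal (1 / invY Θ (1/v)) :=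
          mul_le_mul' (le_refl _) (luxNorm_indicator_le hΘ _ t v hvpos hvol)
      _ = ENNReal.ofReal ((1 / θ (w ^ ((1:ℝ)/n)) * invY Θ (1/w)) * (1 / invY Θ (1/v))) :=
          (ENNReal.ofReal_mul (by positivity)).symm
      _ ≤ _ := by
          apply ENNReal.ofReal_le_ofReal
          have key := hG (v ^ ((1:ℝ)/n)) (w ^ ((1:ℝ)/n)) (by positivity)
            (Real.rpow_le_rpow hvpos.le hvw (by positivity))
          rw [rpow_inv_neg hn hvpos, rpow_inv_neg hn hwpos] at key
          have h3 : invY Θ (1/w) / θ (w ^ ((1:ℝ)/n)) * (1 / invY Θ (1/v))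
              ≤ CG * (invY Θ (1/v) / θ (v ^ ((1:ℝ)/n))) * (1 / invY Θ (1/v)) :=
            mul_le_mul_of_nonneg_right key (by positivity)
          calc (1 / θ (w ^ ((1:ℝ)/n)) * invY Θ (1/w)) * (1 / invY Θ (1/v))
              = invY Θ (1/w) / θ (w ^ ((1:ℝ)/n)) * (1 / invY Θ (1/v)) := by ring
            _ ≤ CG * (invY Θ (1/v) / θ (v ^ ((1:ℝ)/n))) * (1 / invY Θ (1/v)) := h3
            _ = CG * (1 / θ (v ^ ((1:ℝ)/n))) := by field_simp
            _ ≤ (max 1 CG) * (1 / θ (v ^ ((1:ℝ)/n))) :=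
                mul_le_mul_of_nonneg_right (le_max_right 1 CG) (by positivity)

theorem stmt9 (n : ℕ) (hn : 0 < n) (Θ₁ Θ₂ θ₁ θ₂ : ℝ → ℝ)
    (hΘ₁ : IsYoung Θ₁) (hΘ₂ : IsYoung Θ₂)
    (hp : prec Θ₁ Θ₂) (hi : invLesssim Θ₁ Θ₂)
    (hθ₁ : Gclass n Θ₁ θ₁) (hθ₂ : Gclass n Θ₂ θ₂)
    (C : ℝ) (hC : 0 < C)
    (h : ∀ f : En n → ℝ, Measurable f →
      morreyNorm n θ₁ Θ₁ f ≤ ENNReal.ofReal C * morreyNorm n θ₂ Θ₂ f) :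
    ∃ C' : ℝ, 0 < C' ∧ ∀ t : ℝ, 0 < t → θ₂ t ≤ C' * θ₁ t := by
  obtain ⟨CG, hCG, hG⟩ := hθ₂.2.2
  set K := max 1 CG with hK
  have hKpos : 0 < K := lt_of_lt_of_le one_pos (le_max_left 1 CG)
  refine ⟨C * K, by positivity, ?_⟩
  intro s hs
  set c := (volume (ball (0:En n) 1)).toReal with hc
  have hcpos : 0 < c :=
    ENNReal.toReal_pos (measure_ball_pos volume 0 one_pos).ne' measure_ball_lt_top.ne
  set t := s / c ^ ((1:ℝ)/n) with htdef
  have ht : 0 < t := by positivity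
  have hnne : (n:ℝ) ≠ 0 := Nat.cast_ne_zero.mpr hn.ne'
  have hvt : (volume (ball (0:En n) t)).toReal ^ ((1:ℝ)/n) = s := by
    rw [Measure.addHaar_ball_of_pos volume (0 : En n) ht, ENNReal.toReal_mul,
      ENNReal.toReal_ofReal (by positivity), finrank_euclideanSpace_fin, ← hc,
      Real.mul_rpow (by positivity) hcpos.le, ← Real.rpow_natCast t n,
      ← Real.rpow_mul ht.le]
    have h1 : (n:ℝ) * ((1:ℝ)/n) = 1 := by field_simp
    rw [h1, Real.rpow_one, htdef, div_mul_cancel₀ _ (by positivity)]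
  have lower := morrey_lower hn hΘ₁ hθ₁ t ht
  have upper := morrey_upper hn hΘ₂ hθ₂ hCG hG t ht
  rw [hvt] at lower upper
  have hmeas : Measurable (Set.indicator (ball (0:En n) t) (fun _ => (1:ℝ))) :=
    measurable_const.indicator measurableSet_ball
  have hθ₁s : 0 < θ₁ s := hθ₁.1 s hs
  have hθ₂s : 0 < θ₂ s := hθ₂.1 s hs
  have chain : ENNReal.ofReal (1 / θ₁ s) ≤ ENNReal.ofReal (C * (K * (1 / θ₂ s))) := by
    calc ENNReal.ofReal (1 / θ₁ s) ≤ _ := lower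
      _ ≤ ENNReal.ofReal C * morreyNorm n θ₂ Θ₂ _ := h _ hmeas
      _ ≤ ENNReal.ofReal C * ENNReal.ofReal (K * (1 / θ₂ s)) := mul_le_mul' (le_refl _) upper
      _ = ENNReal.ofReal (C * (K * (1 / θ₂ s))) := (ENNReal.ofReal_mul hC.le).symm
  have hre : 1 / θ₁ s ≤ C * (K * (1 / θ₂ s)) :=
    (ENNReal.ofReal_le_ofReal_iff (by positivity)).mp chain
  have heq : C * (K * (1 / θ₂ s)) = (C * K) / θ₂ s := by ring
  rw [heq, div_le_div_iff₀ hθ₁s hθ₂s, one_mul] at hre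
  linarith
end
end

section
/- Let Θ₁, Θ₂ be Young functions with Θ₁ ≺ Θ₂ and Θ₁⁻¹ ≲ Θ₂⁻¹, and let θ₁ ∈ G_{θ₁}, θ₂ ∈ G_{θ₂} with θ₂ ≲ θ₁. Then the weak Orlicz–Morrey spaces satisfy wM_{θ₂,Θ₂}(ℝⁿ) ⊆ wM_{θ₁,Θ₁}(ℝⁿ), with ‖f‖_{wM_{θ₁,Θ₁}} ≤ C‖f‖_{wM_{θ₂,Θ₂}} for some constant C > 0 and all f ∈ wM_{θ₂,Θ₂}(ℝⁿ). -/
open MeasureTheory Metric Set ENNReal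

noncomputable section

lemma wLux_prec {n : ℕ} {Θ₁ Θ₂ : ℝ → ℝ} {Cp : ℝ} (hCp : 0 < Cp)
    (h : ∀ t : ℝ, 0 < t → Θ₁ t ≤ Θ₂ (Cp * t))
    (B : Set (En n)) (f : En n → ℝ) :
    wLuxNorm Θ₁ B f ≤ ENNReal.ofReal Cp * wLuxNorm Θ₂ B f := by
  set S₂ := {e : ℝ≥0∞ | ∃ b : ℝ, 0 < b ∧ e = ENNReal.ofReal b ∧
    ∀ t : ℝ, 0 < t → ENNReal.ofReal (Θ₂ t) * volume {x ∈ B | t < |f x| / b} ≤ 1}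
  rcases Set.eq_empty_or_nonempty S₂ with hS | hS
  · have h2 : wLuxNorm Θ₂ B f = ⊤ := by
      have he : wLuxNorm Θ₂ B f = sInf S₂ := rfl
      rw [he, hS, sInf_empty]
    rw [h2, ENNReal.mul_top (ENNReal.ofReal_pos.mpr hCp).ne']
    exact le_top
  · have hdiv : wLuxNorm Θ₁ B f / ENNReal.ofReal Cp ≤ wLuxNorm Θ₂ B f := by
      rw [wLuxNorm]
      refine le_sInf ?_
      rintro e ⟨b, hb, rfl, hbound⟩
      rw [ENNReal.div_le_iff_le_mul (Or.inl (ENNReal.ofReal_pos.mpr hCp).ne') (Or.inl ENNReal.ofReal_ne_top)]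
      have hmem : ENNReal.ofReal (Cp * b) ∈ {e : ℝ≥0∞ | ∃ b' : ℝ, 0 < b' ∧
          e = ENNReal.ofReal b' ∧
          ∀ t : ℝ, 0 < t → ENNReal.ofReal (Θ₁ t) * volume {x ∈ B | t < |f x| / b'} ≤ 1} := by
        refine ⟨Cp * b, mul_pos hCp hb, rfl, fun t ht => ?_⟩
        have hset : {x ∈ B | t < |f x| / (Cp * b)} = {x ∈ B | Cp * t < |f x| / b} := by
          ext x
          simp only [Set.mem_setOf_eq, and_congr_right_iff]
          intro _
          rw [lt_div_iff₀ hb, lt_div_iff₀ (mul_pos hCp hb)]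
          constructor <;> intro h' <;> nlinarith
        rw [hset]
        calc ENNReal.ofReal (Θ₁ t) * volume {x ∈ B | Cp * t < |f x| / b}
            ≤ ENNReal.ofReal (Θ₂ (Cp * t)) * volume {x ∈ B | Cp * t < |f x| / b} :=
              mul_le_mul_left (ENNReal.ofReal_le_ofReal (h t ht)) _
          _ ≤ 1 := hbound (Cp * t) (mul_pos hCp ht)
      calc wLuxNorm Θ₁ B f ≤ ENNReal.ofReal (Cp * b) := sInf_le hmem
        _ = ENNReal.ofReal b * ENNReal.ofReal Cp := by
            rw [ENNReal.ofReal_mul hCp.le, mul_comm]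
    calc wLuxNorm Θ₁ B f
        = wLuxNorm Θ₁ B f / ENNReal.ofReal Cp * ENNReal.ofReal Cp := by
          rw [ENNReal.div_mul_cancel (ENNReal.ofReal_pos.mpr hCp).ne' ENNReal.ofReal_ne_top]
      _ ≤ wLuxNorm Θ₂ B f * ENNReal.ofReal Cp := mul_le_mul_left hdiv _
      _ = ENNReal.ofReal Cp * wLuxNorm Θ₂ B f := mul_comm _ _

theorem stmt10 (n : ℕ) (hn : 0 < n) (Θ₁ Θ₂ θ₁ θ₂ : ℝ → ℝ)
    (hΘ₁ : IsYoung Θ₁) (hΘ₂ : IsYoung Θ₂)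
    (hp : prec Θ₁ Θ₂) (hi : invLesssim Θ₁ Θ₂)
    (hθ₁ : Gclass n Θ₁ θ₁) (hθ₂ : Gclass n Θ₂ θ₂)
    (C : ℝ) (hC : 0 < C) (hθ : ∀ t : ℝ, 0 < t → θ₂ t ≤ C * θ₁ t) :
    ∃ C' : ℝ, 0 < C' ∧ ∀ f : En n → ℝ, Measurable f →
      (wMorreyNorm n θ₁ Θ₁ f ≤ ENNReal.ofReal C' * wMorreyNorm n θ₂ Θ₂ f) ∧
      (wMorreyNorm n θ₂ Θ₂ f ≠ ⊤ → wMorreyNorm n θ₁ Θ₁ f ≠ ⊤) := by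
  obtain ⟨Cp, hCp, hprec⟩ := hp
  obtain ⟨Ci, hCi, hinv⟩ := hi
  refine ⟨C * Ci * Cp, by positivity, fun f hf => ?_⟩
  have key : wMorreyNorm n θ₁ Θ₁ f ≤ ENNReal.ofReal (C * Ci * Cp) * wMorreyNorm n θ₂ Θ₂ f := by
    rw [wMorreyNorm]
    refine iSup_le fun a => iSup_le fun r => iSup_le fun hr => ?_
    set v := (volume (ball a r)).toReal with hv
    have hvpos : 0 < v := ENNReal.toReal_pos (measure_ball_pos volume a hr).ne'
      measure_ball_lt_top.ne
    have hρ : 0 < v ^ ((1:ℝ)/n) := Real.rpow_pos_of_pos hvpos _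
    have hθ₁ρ : 0 < θ₁ (v ^ ((1:ℝ)/n)) := hθ₁.1 _ hρ
    have hθ₂ρ : 0 < θ₂ (v ^ ((1:ℝ)/n)) := hθ₂.1 _ hρ
    have hi₂ : 0 ≤ invY Θ₂ (1 / v) := invY_nonneg _ _
    have hfac : (1 / θ₁ (v ^ ((1:ℝ)/n))) * invY Θ₁ (1 / v) ≤
        (C * Ci) * ((1 / θ₂ (v ^ ((1:ℝ)/n))) * invY Θ₂ (1 / v)) := by
      have h1 : 1 / θ₁ (v ^ ((1:ℝ)/n)) ≤ C / θ₂ (v ^ ((1:ℝ)/n)) := by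
        rw [div_le_div_iff₀ hθ₁ρ hθ₂ρ]
        nlinarith [hθ _ hρ]
      have h2 : invY Θ₁ (1 / v) ≤ Ci * invY Θ₂ (1 / v) := hinv _ (by positivity)
      calc (1 / θ₁ (v ^ ((1:ℝ)/n))) * invY Θ₁ (1 / v)
          ≤ (C / θ₂ (v ^ ((1:ℝ)/n))) * (Ci * invY Θ₂ (1 / v)) :=
            mul_le_mul h1 h2 (invY_nonneg _ _) (by positivity)
        _ = (C * Ci) * ((1 / θ₂ (v ^ ((1:ℝ)/n))) * invY Θ₂ (1 / v)) := by ring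
    have hK : ENNReal.ofReal ((1 / θ₁ (v ^ ((1:ℝ)/n))) * invY Θ₁ (1 / v)) ≤
        ENNReal.ofReal (C * Ci) *
          ENNReal.ofReal ((1 / θ₂ (v ^ ((1:ℝ)/n))) * invY Θ₂ (1 / v)) := by
      rw [← ENNReal.ofReal_mul (by positivity)]
      exact ENNReal.ofReal_le_ofReal hfac
    have hw : wLuxNorm Θ₁ (ball a r) f ≤ ENNReal.ofReal Cp * wLuxNorm Θ₂ (ball a r) f :=
      wLux_prec hCp hprec _ _
    calc ENNReal.ofReal ((1 / θ₁ (v ^ ((1:ℝ)/n))) * invY Θ₁ (1 / v)) * wLuxNorm Θ₁ (ball a r) f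
        ≤ (ENNReal.ofReal (C * Ci) *
            ENNReal.ofReal ((1 / θ₂ (v ^ ((1:ℝ)/n))) * invY Θ₂ (1 / v))) *
            (ENNReal.ofReal Cp * wLuxNorm Θ₂ (ball a r) f) := mul_le_mul' hK hw
      _ = ENNReal.ofReal (C * Ci * Cp) *
            (ENNReal.ofReal ((1 / θ₂ (v ^ ((1:ℝ)/n))) * invY Θ₂ (1 / v)) *
              wLuxNorm Θ₂ (ball a r) f) := by
          rw [mul_mul_mul_comm, ← ENNReal.ofReal_mul (show (0:ℝ) ≤ C * Ci by positivity)]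
      _ ≤ ENNReal.ofReal (C * Ci * Cp) * wMorreyNorm n θ₂ Θ₂ f := by
          refine mul_le_mul_right ?_ _
          exact le_iSup_of_le a (le_iSup_of_le r (le_iSup_of_le hr le_rfl))
  refine ⟨key, fun htop => ?_⟩
  exact ne_top_of_le_ne_top (ENNReal.mul_ne_top ENNReal.ofReal_ne_top htop) key
end
end

section
/- Let 1 ≤ p < ∞ and θ₁, θ₂ : (0,∞) → (0,∞) be decreasing functions such that t ↦ t^{-n/p}/θᵢ(t) is almost decreasing (i = 1,2). If θ₂(t) ≤ C θ₁(t) for some C > 0 and all t > 0, then the generalized weak Morrey spaces satisfy wM^p_{θ₂}(ℝⁿ) ⊆ wM^p_{θ₁}(ℝⁿ), with ‖f‖_{wM^p_{θ₁}} ≤ C'‖f‖_{wM^p_{θ₂}} for some C' > 0; conversely, if such a norm inequality holds for all f, then θ₂ ≲ θ₁. -/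
open MeasureTheory Metric Set ENNReal

noncomputable section

lemma invY_rpow {p s : ℝ} (hp : 0 < p) (hs : 0 < s) :
    invY (fun t => t ^ p) s = s ^ p⁻¹ := by
  have hset : {r : ℝ | 0 ≤ r ∧ s < r ^ p} = Ioi (s ^ p⁻¹) := by
    ext r
    simp only [mem_ofPred_eq, mem_Ioi]
    constructor
    · rintro ⟨hr, hsr⟩
      calc s ^ p⁻¹ < (r ^ p) ^ p⁻¹ := by gcongr
        _ = r := Real.rpow_rpow_inv hr hp.ne'
    · intro hr
      have hr0 : 0 ≤ r := (Real.rpow_nonneg hs.le _).trans hr.le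
      refine ⟨hr0, ?_⟩
      calc s = (s ^ p⁻¹) ^ p := (Real.rpow_inv_rpow hs.le hp.ne').symm
        _ < r ^ p := by gcongr
  rw [invY, hset, csInf_Ioi]

lemma setOf_lt_abs_indicator_div {α : Type*} (B B₀ : Set α) {b t : ℝ} (ht : 0 < t) :
    {x ∈ B | t < |B₀.indicator (fun _ => (1 : ℝ)) x| / b} =
      if t < b⁻¹ then B ∩ B₀ else ∅ := by
  ext x
  by_cases hx : x ∈ B₀ <;> split_ifs with htb <;> simp [hx, htb, not_lt.mpr ht.le]

section WeakLp

variable {n : ℕ} {p : ℝ}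

lemma wLuxNorm_indicator_le (hp : 0 < p) (B B₀ : Set (En n)) :
    wLuxNorm (fun t => t ^ p) B (B₀.indicator fun _ => 1) ≤ volume (B ∩ B₀) ^ p⁻¹ := by
  refine le_of_forall_gt_imp_ge_of_dense fun e he => ?_
  rcases eq_or_ne e ∞ with rfl | he_top
  · exact le_top
  have he0 : 0 < e.toReal := ENNReal.toReal_pos (pos_of_gt he).ne' he_top
  have hvol : volume (B ∩ B₀) ≤ ENNReal.ofReal (e.toReal ^ p) := by
    rw [← ENNReal.ofReal_rpow_of_nonneg he0.le hp.le, ENNReal.ofReal_toReal he_top,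
      ← ENNReal.rpow_inv_rpow hp.ne' (volume (B ∩ B₀))]
    gcongr
  refine sInf_le ⟨e.toReal, he0, (ENNReal.ofReal_toReal he_top).symm, fun t ht => ?_⟩
  rw [setOf_lt_abs_indicator_div B B₀ ht]
  split_ifs with hte
  · calc ENNReal.ofReal (t ^ p) * volume (B ∩ B₀)
        ≤ ENNReal.ofReal (t ^ p) * ENNReal.ofReal (e.toReal ^ p) := by gcongr
      _ = ENNReal.ofReal ((t * e.toReal) ^ p) := by
        rw [← ENNReal.ofReal_mul (by positivity), Real.mul_rpow ht.le he0.le]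
      _ ≤ 1 := by
        refine ENNReal.ofReal_le_one.mpr (Real.rpow_le_one (by positivity) ?_ hp.le)
        simpa using ((lt_inv_mul_iff₀' he0).mp (by simpa using hte)).le
  · simp

lemma volume_rpow_inv_le_wLuxNorm_indicator (hp : 0 < p) (B B₀ : Set (En n)) :
    volume (B ∩ B₀) ^ p⁻¹ ≤ wLuxNorm (fun t => t ^ p) B (B₀.indicator fun _ => 1) := by
  refine le_sInf ?_
  rintro _ ⟨b, hb, rfl, hweak⟩
  suffices hvol : volume (B ∩ B₀) ≤ ENNReal.ofReal (b ^ p) by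
    calc volume (B ∩ B₀) ^ p⁻¹ ≤ ENNReal.ofReal (b ^ p) ^ p⁻¹ := by gcongr
      _ = ENNReal.ofReal b := by
        rw [← ENNReal.ofReal_rpow_of_nonneg hb.le hp.le, ENNReal.rpow_rpow_inv hp.ne']
  by_contra! hlt
  -- test the weak-type bound at the level `t = u^{-1/p}` for some `b^p < u < |B ∩ B₀|`
  obtain ⟨e, hbe, he⟩ := exists_between hlt
  have he_top : e ≠ ∞ := he.ne_top
  set u := e.toReal
  have hbu : b ^ p < u := (ENNReal.ofReal_lt_iff_lt_toReal (by positivity) he_top).mp hbe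
  have hu : 0 < u := (Real.rpow_pos_of_pos hb p).trans hbu
  have ht : 0 < u ^ (-p⁻¹) := Real.rpow_pos_of_pos hu _
  have htb : u ^ (-p⁻¹) < b⁻¹ := by
    calc u ^ (-p⁻¹) < (b ^ p) ^ (-p⁻¹) :=
          Real.rpow_lt_rpow_of_neg (by positivity) hbu (by simpa using hp)
      _ = b⁻¹ := by rw [Real.rpow_neg (by positivity), Real.rpow_rpow_inv hb.le hp.ne']
  have hweak' := hweak _ ht
  beta_reduce at hweak'
  rw [setOf_lt_abs_indicator_div B B₀ ht, if_pos htb, Real.rpow_neg hu.le,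
    Real.inv_rpow (by positivity), Real.rpow_inv_rpow hu.le hp.ne'] at hweak'
  have : (1 : ℝ≥0∞) < ENNReal.ofReal u⁻¹ * volume (B ∩ B₀) := by
    calc (1 : ℝ≥0∞) = ENNReal.ofReal u⁻¹ * e := by
          rw [← ENNReal.ofReal_toReal he_top, ← ENNReal.ofReal_mul (by positivity),
            inv_mul_cancel₀ hu.ne', ENNReal.ofReal_one]
      _ < ENNReal.ofReal u⁻¹ * volume (B ∩ B₀) :=
          ENNReal.mul_lt_mul_right (by simpa using hu) ENNReal.ofReal_ne_top he
  exact this.not_ge hweak'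

lemma wLuxNorm_indicator (hp : 0 < p) (B B₀ : Set (En n)) :
    wLuxNorm (fun t => t ^ p) B (B₀.indicator fun _ => 1) = volume (B ∩ B₀) ^ p⁻¹ :=
  (wLuxNorm_indicator_le hp B B₀).antisymm (volume_rpow_inv_le_wLuxNorm_indicator hp B B₀)

end WeakLp

section VolumeRadius

variable {n : ℕ}

def volRadius (B : Set (En n)) : ℝ := (volume B).toReal ^ ((1 : ℝ) / n)

lemma volRadius_nonneg (B : Set (En n)) : 0 ≤ volRadius B :=
  Real.rpow_nonneg ENNReal.toReal_nonneg _

lemma volRadius_pos {B : Set (En n)} (h0 : volume B ≠ 0) (htop : volume B ≠ ∞) :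
    0 < volRadius B :=
  Real.rpow_pos_of_pos (ENNReal.toReal_pos h0 htop) _

lemma volRadius_ball_pos (a : En n) {r : ℝ} (hr : 0 < r) : 0 < volRadius (ball a r) :=
  volRadius_pos (measure_ball_pos volume a hr).ne' measure_ball_lt_top.ne

lemma volRadius_mono {A B : Set (En n)} (hAB : A ⊆ B) (hB : volume B ≠ ∞) :
    volRadius A ≤ volRadius B := by
  unfold volRadius
  gcongr

lemma volRadius_rpow (hn : n ≠ 0) (B : Set (En n)) (x : ℝ) :
    volRadius B ^ ((n : ℝ) * x) = (volume B).toReal ^ x := by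
  rw [volRadius, ← Real.rpow_mul ENNReal.toReal_nonneg, ← mul_assoc, one_div_mul_cancel
    (Nat.cast_ne_zero.mpr hn), one_mul]

lemma volRadius_ball (hn : n ≠ 0) (a : En n) {r : ℝ} (hr : 0 < r) :
    volRadius (ball a r) = volRadius (ball (0 : En n) 1) * r := by
  rw [volRadius, volRadius, Measure.addHaar_ball_of_pos volume a hr, finrank_euclideanSpace_fin,
    ENNReal.toReal_mul, ENNReal.toReal_ofReal (by positivity), Real.mul_rpow (by positivity)
    ENNReal.toReal_nonneg, one_div, Real.pow_rpow_inv_natCast hr.le hn, mul_comm]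

lemma exists_volRadius_ball_eq (hn : n ≠ 0) {t : ℝ} (ht : 0 < t) :
    ∃ s, 0 < s ∧ volRadius (ball (0 : En n) s) = t := by
  have hκ := volRadius_ball_pos (0 : En n) one_pos
  refine ⟨t / volRadius (ball (0 : En n) 1), by positivity, ?_⟩
  rw [volRadius_ball hn 0 (by positivity), mul_div_cancel₀ _ hκ.ne']

end VolumeRadius

lemma min_rpow_mul_rpow_neg_div_le {θ : ℝ → ℝ} {q C : ℝ}
    (hθpos : ∀ t, 0 < t → 0 < θ t) (hθdec : ∀ s t, 0 < s → s ≤ t → θ t ≤ θ s)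
    (had : ∀ s t, 0 < s → s ≤ t → t ^ (-q) / θ t ≤ C * (s ^ (-q) / θ s))
    {ρ σ : ℝ} (hρ : 0 < ρ) (hσ : 0 < σ) :
    min ρ σ ^ q * (ρ ^ (-q) / θ ρ) ≤ max C 1 / θ σ := by
  have hθσ := hθpos σ hσ
  rcases le_total ρ σ with hρσ | hσρ
  · calc min ρ σ ^ q * (ρ ^ (-q) / θ ρ) = 1 / θ ρ := by
          rw [min_eq_left hρσ, mul_div_assoc', ← Real.rpow_add hρ, add_neg_cancel,
            Real.rpow_zero]
      _ ≤ 1 / θ σ := one_div_le_one_div_of_le hθσ (hθdec ρ σ hρ hρσ)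
      _ ≤ max C 1 / θ σ := by gcongr; exact le_max_right C 1
  · calc min ρ σ ^ q * (ρ ^ (-q) / θ ρ) ≤ σ ^ q * (C * (σ ^ (-q) / θ σ)) := by
          rw [min_eq_right hσρ]
          gcongr
          exact had σ ρ hσ hσρ
      _ = C / θ σ := by
          rw [Real.rpow_neg hσ.le]
          field_simp [(Real.rpow_pos_of_pos hσ q).ne']
      _ ≤ max C 1 / θ σ := by gcongr; exact le_max_left C 1

section WeakMorrey

variable {n : ℕ} {p : ℝ}

lemma one_div_mul_invY_rpow (hn : n ≠ 0) (hp : 0 < p) (θ : ℝ → ℝ) {B : Set (En n)}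
    (h0 : volume B ≠ 0) (htop : volume B ≠ ∞) :
    1 / θ (volRadius B) * invY (fun t => t ^ p) (1 / (volume B).toReal) =
      volRadius B ^ (-((n : ℝ) / p)) / θ (volRadius B) := by
  have hB : 0 < (volume B).toReal := ENNReal.toReal_pos h0 htop
  rw [invY_rpow hp (by positivity), div_eq_mul_inv (n : ℝ), ← mul_neg, volRadius_rpow hn,
    one_div (volume B).toReal, Real.inv_rpow hB.le, Real.rpow_neg hB.le]
  ring

lemma volume_rpow_inv (hn : n ≠ 0) (hp : 0 < p) {B : Set (En n)} (htop : volume B ≠ ∞) :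
    volume B ^ p⁻¹ = ENNReal.ofReal (volRadius B ^ ((n : ℝ) / p)) := by
  rw [div_eq_mul_inv, volRadius_rpow hn,
    ← ENNReal.ofReal_rpow_of_nonneg ENNReal.toReal_nonneg (inv_nonneg.mpr hp.le),
    ENNReal.ofReal_toReal htop]

lemma wMorreyNorm_rpow_eq (hn : n ≠ 0) (hp : 0 < p) (θ : ℝ → ℝ) (f : En n → ℝ) :
    wMorreyNorm n θ (fun t => t ^ p) f = ⨆ (a : En n) (r : ℝ) (_ : 0 < r),
      ENNReal.ofReal (volRadius (ball a r) ^ (-((n : ℝ) / p)) / θ (volRadius (ball a r))) *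
        wLuxNorm (fun t => t ^ p) (ball a r) f := by
  refine iSup_congr fun a => iSup_congr fun r => iSup_congr fun hr => ?_
  rw [← one_div_mul_invY_rpow hn hp θ (measure_ball_pos volume a hr).ne'
    measure_ball_lt_top.ne]
  rfl

lemma ofReal_one_div_le_wMorreyNorm_indicator_ball (hn : n ≠ 0) (hp : 0 < p) (θ : ℝ → ℝ)
    (x₀ : En n) {s : ℝ} (hs : 0 < s) :
    ENNReal.ofReal (1 / θ (volRadius (ball x₀ s))) ≤
      wMorreyNorm n θ (fun t => t ^ p) ((ball x₀ s).indicator fun _ => 1) := by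
  rw [wMorreyNorm_rpow_eq hn hp]
  refine le_iSup₂_of_le x₀ s (le_iSup_of_le hs (le_of_eq ?_))
  have hσ := volRadius_ball_pos x₀ hs
  rw [wLuxNorm_indicator hp, inter_self, volume_rpow_inv hn hp measure_ball_lt_top.ne,
    ← ENNReal.ofReal_mul' (by positivity), div_mul_eq_mul_div, ← Real.rpow_add hσ,
    neg_add_cancel, Real.rpow_zero]

lemma wMorreyNorm_indicator_ball_le (hn : n ≠ 0) (hp : 0 < p) {θ : ℝ → ℝ}
    (hθpos : ∀ t, 0 < t → 0 < θ t) (hθdec : ∀ s t, 0 < s → s ≤ t → θ t ≤ θ s) {C : ℝ}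
    (had : ∀ s t, 0 < s → s ≤ t →
      t ^ (-((n : ℝ) / p)) / θ t ≤ C * (s ^ (-((n : ℝ) / p)) / θ s))
    (x₀ : En n) {s : ℝ} (hs : 0 < s) :
    wMorreyNorm n θ (fun t => t ^ p) ((ball x₀ s).indicator fun _ => 1) ≤
      ENNReal.ofReal (max C 1 / θ (volRadius (ball x₀ s))) := by
  rw [wMorreyNorm_rpow_eq hn hp]
  refine iSup_le fun a => iSup₂_le fun r hr => ?_
  have hρ := volRadius_ball_pos a hr
  have hσ := volRadius_ball_pos x₀ hs
  have hθρ := hθpos _ hρ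
  have hinter : volRadius (ball a r ∩ ball x₀ s) ≤
      min (volRadius (ball a r)) (volRadius (ball x₀ s)) :=
    le_min (volRadius_mono inter_subset_left measure_ball_lt_top.ne)
      (volRadius_mono inter_subset_right measure_ball_lt_top.ne)
  rw [wLuxNorm_indicator hp, volume_rpow_inv hn hp
    ((measure_mono inter_subset_left).trans_lt measure_ball_lt_top).ne,
    ← ENNReal.ofReal_mul' (Real.rpow_nonneg (volRadius_nonneg _) _)]
  refine ENNReal.ofReal_le_ofReal ?_
  calc _ ≤ volRadius (ball a r) ^ (-((n : ℝ) / p)) / θ (volRadius (ball a r)) *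
        min (volRadius (ball a r)) (volRadius (ball x₀ s)) ^ ((n : ℝ) / p) := by
        gcongr
        exact volRadius_nonneg _
    _ ≤ _ := by
        rw [mul_comm]
        exact min_rpow_mul_rpow_neg_div_le hθpos hθdec had hρ hσ

end WeakMorrey

lemma wMorreyNorm_le_ofReal_mul {n : ℕ} {θ₁ θ₂ : ℝ → ℝ} (Θ : ℝ → ℝ) {C : ℝ}
    (hθ₁pos : ∀ t, 0 < t → 0 < θ₁ t) (hθ₂pos : ∀ t, 0 < t → 0 < θ₂ t)
    (hθ : ∀ t, 0 < t → θ₂ t ≤ C * θ₁ t) (f : En n → ℝ) :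
    wMorreyNorm n θ₁ Θ f ≤ ENNReal.ofReal C * wMorreyNorm n θ₂ Θ f := by
  refine iSup_le fun a => iSup₂_le fun r hr => ?_
  have hρ : 0 < volRadius (ball a r) := volRadius_ball_pos a hr
  have hθ₂ρ := hθ₂pos _ hρ
  have hweight : 1 / θ₁ (volRadius (ball a r)) ≤ C * (1 / θ₂ (volRadius (ball a r))) := by
    rw [mul_one_div, div_le_div_iff₀ (hθ₁pos _ hρ) hθ₂ρ, one_mul]
    exact hθ _ hρ
  have hinvY := invY_nonneg Θ (1 / (volume (ball a r)).toReal)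
  calc _ ≤ ENNReal.ofReal C * (ENNReal.ofReal (1 / θ₂ (volRadius (ball a r)) *
        invY Θ (1 / (volume (ball a r)).toReal)) * wLuxNorm Θ (ball a r) f) := by
        rw [← mul_assoc, ← ENNReal.ofReal_mul' (by positivity), ← mul_assoc]
        gcongr
        exact hweight
    _ ≤ ENNReal.ofReal C * wMorreyNorm n θ₂ Θ f := by
        gcongr
        exact le_iSup₂_of_le a r (le_iSup_of_le hr le_rfl)

theorem stmt12_general (n : ℕ) (hn : 0 < n) (p : ℝ) (hp : 1 ≤ p) (θ₁ θ₂ : ℝ → ℝ)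
    (hθ₁pos : ∀ t : ℝ, 0 < t → 0 < θ₁ t) (hθ₂pos : ∀ t : ℝ, 0 < t → 0 < θ₂ t)
    (hθ₂dec : ∀ s t : ℝ, 0 < s → s ≤ t → θ₂ t ≤ θ₂ s)
    (hθ₂ad : ∃ C : ℝ, 0 < C ∧ ∀ s t : ℝ, 0 < s → s ≤ t →
      t ^ (-(n:ℝ)/p) / θ₂ t ≤ C * (s ^ (-(n:ℝ)/p) / θ₂ s)) :
    ((∃ C : ℝ, 0 < C ∧ ∀ t : ℝ, 0 < t → θ₂ t ≤ C * θ₁ t) →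
      ∃ C' : ℝ, 0 < C' ∧ ∀ f : En n → ℝ, Measurable f →
        wMorreyNorm n θ₁ (fun t => t ^ p) f ≤
          ENNReal.ofReal C' * wMorreyNorm n θ₂ (fun t => t ^ p) f) ∧
    ((∃ C' : ℝ, 0 < C' ∧ ∀ f : En n → ℝ, Measurable f →
        wMorreyNorm n θ₁ (fun t => t ^ p) f ≤
          ENNReal.ofReal C' * wMorreyNorm n θ₂ (fun t => t ^ p) f) →
      ∃ C : ℝ, 0 < C ∧ ∀ t : ℝ, 0 < t → θ₂ t ≤ C * θ₁ t) := by
  replace hn : n ≠ 0 := hn.ne'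
  replace hp : 0 < p := zero_lt_one.trans_le hp
  refine ⟨fun ⟨C, hC, hθ⟩ => ⟨C, hC, fun f _ =>
    wMorreyNorm_le_ofReal_mul _ hθ₁pos hθ₂pos hθ f⟩, ?_⟩
  rintro ⟨C', hC', hnorm⟩
  obtain ⟨C, -, had⟩ := hθ₂ad
  simp_rw [neg_div] at had
  refine ⟨C' * max C 1, by positivity, fun t ht => ?_⟩
  obtain ⟨s, hs, rfl⟩ := exists_volRadius_ball_eq hn ht
  have hf : Measurable ((ball (0 : En n) s).indicator fun _ => (1 : ℝ)) :=
    measurable_const.indicator measurableSet_ball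
  have hbound := (ofReal_one_div_le_wMorreyNorm_indicator_ball hn hp θ₁ 0 hs).trans
    ((hnorm _ hf).trans (mul_le_mul_right
      (wMorreyNorm_indicator_ball_le hn hp hθ₂pos hθ₂dec had 0 hs) _))
  have hθ₁t := hθ₁pos _ ht
  have hθ₂t := hθ₂pos _ ht
  rw [← ENNReal.ofReal_mul hC'.le, ENNReal.ofReal_le_ofReal_iff (by positivity),
    mul_div_assoc', div_le_div_iff₀ hθ₁t hθ₂t, one_mul] at hbound
  linarith

theorem stmt12 (n : ℕ) (hn : 0 < n) (p : ℝ) (hp : 1 ≤ p) (θ₁ θ₂ : ℝ → ℝ)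
    (hθ₁pos : ∀ t : ℝ, 0 < t → 0 < θ₁ t) (hθ₂pos : ∀ t : ℝ, 0 < t → 0 < θ₂ t)
    (hθ₁dec : ∀ s t : ℝ, 0 < s → s ≤ t → θ₁ t ≤ θ₁ s)
    (hθ₂dec : ∀ s t : ℝ, 0 < s → s ≤ t → θ₂ t ≤ θ₂ s)
    (hθ₁ad : ∃ C : ℝ, 0 < C ∧ ∀ s t : ℝ, 0 < s → s ≤ t →
      t ^ (-(n:ℝ)/p) / θ₁ t ≤ C * (s ^ (-(n:ℝ)/p) / θ₁ s))
    (hθ₂ad : ∃ C : ℝ, 0 < C ∧ ∀ s t : ℝ, 0 < s → s ≤ t →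
      t ^ (-(n:ℝ)/p) / θ₂ t ≤ C * (s ^ (-(n:ℝ)/p) / θ₂ s)) :
    ((∃ C : ℝ, 0 < C ∧ ∀ t : ℝ, 0 < t → θ₂ t ≤ C * θ₁ t) →
      ∃ C' : ℝ, 0 < C' ∧ ∀ f : En n → ℝ, Measurable f →
        wMorreyNorm n θ₁ (fun t => t ^ p) f ≤
          ENNReal.ofReal C' * wMorreyNorm n θ₂ (fun t => t ^ p) f) ∧
    ((∃ C' : ℝ, 0 < C' ∧ ∀ f : En n → ℝ, Measurable f →
        wMorreyNorm n θ₁ (fun t => t ^ p) f ≤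
          ENNReal.ofReal C' * wMorreyNorm n θ₂ (fun t => t ^ p) f) →
      ∃ C : ℝ, 0 < C ∧ ∀ t : ℝ, 0 < t → θ₂ t ≤ C * θ₁ t) :=
  stmt12_general n hn p hp θ₁ θ₂ hθ₁pos hθ₂pos hθ₂dec hθ₂ad
end
end

section
/- Let Θ₁, Θ₂ be Young functions with Θ₁ ≺ Θ₂ and Θ₁⁻¹ ≲ Θ₂⁻¹, and θ₁ ∈ G_{θ₁}, θ₂ ∈ G_{θ₂} with θ₂ ≲ θ₁. Then the strong-to-weak diagonal inclusion holds: M_{θ₂,Θ₂}(ℝⁿ) ⊆ wM_{θ₁,Θ₁}(ℝⁿ), with ‖f‖_{wM_{θ₁,Θ₁}} ≤ C‖f‖_{M_{θ₂,Θ₂}} for some C > 0 and all f ∈ M_{θ₂,Θ₂}(ℝⁿ). -/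
/-!
Ball by ball: `Θ₁ ≺ Θ₂` bounds the weak `Θ₁`-Luxemburg norm by the weak `Θ₂`-one, Chebyshev's
inequality bounds that by the strong `Θ₂`-Luxemburg norm, and `Θ₁⁻¹ ≲ Θ₂⁻¹` together with
`θ₂ ≲ θ₁` bounds the Morrey weight of `(θ₁, Θ₁)` by that of `(θ₂, Θ₂)`; take the supremum over balls.
-/

open MeasureTheory Metric Set ENNReal

noncomputable section

/-- `morreyNorm` and `wMorreyNorm` are, definitionally, suprema over balls of this weight times
the local (weak) Luxemburg norm. -/
def morreyWeight (n : ℕ) (θ Θ : ℝ → ℝ) (B : Set (En n)) : ℝ :=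
  (1 / θ ((volume B).toReal ^ ((1:ℝ)/n))) * invY Θ (1 / (volume B).toReal)

lemma IsYoung.monotoneOn {Θ : ℝ → ℝ} (hΘ : IsYoung Θ) : MonotoneOn Θ (Ici 0) := by
  obtain ⟨hconv, -, h0, hnonneg, -⟩ := hΘ
  intro s hs t ht hst
  rcases (mem_Ici.mp hs).eq_or_lt with rfl | hs_pos
  · rw [h0]; exact hnonneg t ht
  · exact hconv.le_right_of_left_le'' self_mem_Ici ht hs_pos hst (by rw [h0]; exact hnonneg s hs)

/-- Chebyshev's inequality for the modular `∫_B Θ(|f|/b)`. -/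
lemma wLuxNorm_le_luxNorm {n : ℕ} {Θ : ℝ → ℝ} (hΘ : MonotoneOn Θ (Ici 0))
    {B : Set (En n)} (hB : MeasurableSet B) {f : En n → ℝ} (hf : Measurable f) :
    wLuxNorm Θ B f ≤ luxNorm Θ B f := by
  refine sInf_le_sInf ?_
  rintro e ⟨b, hb, rfl, hmod⟩
  refine ⟨b, hb, rfl, fun t ht => ?_⟩
  set A := {x ∈ B | t < |f x| / b}
  have hA : MeasurableSet A :=
    hB.inter (measurableSet_lt measurable_const (hf.abs.div_const b))
  calc ENNReal.ofReal (Θ t) * volume A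
      = ∫⁻ _ in A, ENNReal.ofReal (Θ t) := (setLIntegral_const A _).symm
    _ ≤ ∫⁻ x in A, ENNReal.ofReal (Θ (|f x| / b)) :=
        setLIntegral_mono' hA fun x hx =>
          ENNReal.ofReal_le_ofReal (hΘ ht.le (ht.trans hx.2).le hx.2.le)
    _ ≤ ∫⁻ x in B, ENNReal.ofReal (Θ (|f x| / b)) := lintegral_mono_set fun _ hx => hx.1
    _ ≤ 1 := hmod

lemma wLuxNorm_le_mul_wLuxNorm {n : ℕ} {Θ₁ Θ₂ : ℝ → ℝ} {C : ℝ} (hC : 0 < C)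
    (h : ∀ t : ℝ, 0 < t → Θ₁ t ≤ Θ₂ (C * t)) (B : Set (En n)) (f : En n → ℝ) :
    wLuxNorm Θ₁ B f ≤ ENNReal.ofReal C * wLuxNorm Θ₂ B f := by
  have hC0 : ENNReal.ofReal C ≠ 0 := ENNReal.ofReal_pos.mpr hC |>.ne'
  rw [mul_comm, ← ENNReal.div_le_iff hC0 ofReal_ne_top]
  refine le_sInf ?_
  rintro e ⟨b, hb, rfl, hweak⟩
  rw [ENNReal.div_le_iff hC0 ofReal_ne_top, ← ENNReal.ofReal_mul hb.le, mul_comm b C]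
  refine sInf_le ⟨C * b, mul_pos hC hb, rfl, fun t ht => ?_⟩
  have hset : {x ∈ B | t < |f x| / (C * b)} = {x ∈ B | C * t < |f x| / b} := by
    ext x
    simp only [mem_ofPred_eq, lt_div_iff₀ (mul_pos hC hb), lt_div_iff₀ hb, mul_left_comm t C b,
      mul_assoc]
  calc ENNReal.ofReal (Θ₁ t) * volume {x ∈ B | t < |f x| / (C * b)}
      ≤ ENNReal.ofReal (Θ₂ (C * t)) * volume {x ∈ B | C * t < |f x| / b} := by
        rw [hset]; gcongr; exact h t ht
    _ ≤ 1 := hweak _ (mul_pos hC ht)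

lemma morreyWeight_le {n : ℕ} {θ₁ θ₂ Θ₁ Θ₂ : ℝ → ℝ} {C₀ C₁ : ℝ} (hC₀ : 0 < C₀)
    (hθ₂ : ∀ t : ℝ, 0 < t → 0 < θ₂ t) (hθ : ∀ t : ℝ, 0 < t → θ₂ t ≤ C₀ * θ₁ t)
    (hi : ∀ t : ℝ, 0 < t → invY Θ₁ t ≤ C₁ * invY Θ₂ t)
    {B : Set (En n)} (hB : 0 < (volume B).toReal) :
    morreyWeight n θ₁ Θ₁ B ≤ C₀ * C₁ * morreyWeight n θ₂ Θ₂ B := by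
  set u := (volume B).toReal ^ ((1:ℝ)/n)
  have hu : 0 < u := Real.rpow_pos_of_pos hB _
  have hθ₁u : 0 < θ₁ u := pos_of_mul_pos_right ((hθ₂ u hu).trans_le (hθ u hu)) hC₀.le
  have hθu : 1 / θ₁ u ≤ C₀ / θ₂ u := by
    rw [div_le_div_iff₀ hθ₁u (hθ₂ u hu)]
    linarith [hθ u hu]
  calc morreyWeight n θ₁ Θ₁ B
      ≤ C₀ / θ₂ u * (C₁ * invY Θ₂ (1 / (volume B).toReal)) :=
        mul_le_mul hθu (hi _ (by positivity)) (invY_nonneg _ _)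
          (div_nonneg hC₀.le (hθ₂ u hu).le)
    _ = C₀ * C₁ * morreyWeight n θ₂ Θ₂ B := by
        rw [morreyWeight]; ring

lemma wMorreyNorm_le_mul_morreyNorm {n : ℕ} {θ₁ θ₂ Θ₁ Θ₂ : ℝ → ℝ} {f : En n → ℝ}
    {K L : ℝ} (hK : 0 ≤ K)
    (hw : ∀ (a : En n) (r : ℝ), 0 < r →
      morreyWeight n θ₁ Θ₁ (ball a r) ≤ K * morreyWeight n θ₂ Θ₂ (ball a r))
    (hl : ∀ (a : En n) (r : ℝ), 0 < r →
      wLuxNorm Θ₁ (ball a r) f ≤ ENNReal.ofReal L * luxNorm Θ₂ (ball a r) f) :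
    wMorreyNorm n θ₁ Θ₁ f ≤ ENNReal.ofReal (K * L) * morreyNorm n θ₂ Θ₂ f := by
  refine iSup₂_le fun a r => iSup_le fun hr => ?_
  calc ENNReal.ofReal (morreyWeight n θ₁ Θ₁ (ball a r)) * wLuxNorm Θ₁ (ball a r) f
      ≤ ENNReal.ofReal (K * morreyWeight n θ₂ Θ₂ (ball a r)) *
          (ENNReal.ofReal L * luxNorm Θ₂ (ball a r) f) :=
        mul_le_mul' (ENNReal.ofReal_le_ofReal (hw a r hr)) (hl a r hr)
    _ = ENNReal.ofReal (K * L) *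
          (ENNReal.ofReal (morreyWeight n θ₂ Θ₂ (ball a r)) * luxNorm Θ₂ (ball a r) f) := by
        rw [ENNReal.ofReal_mul hK, ENNReal.ofReal_mul hK]; ring
    _ ≤ ENNReal.ofReal (K * L) * morreyNorm n θ₂ Θ₂ f :=
        mul_le_mul_right (le_iSup₂_of_le a r (le_iSup (fun _ : 0 < r => _) hr)) _

theorem stmt15_general (n : ℕ) (Θ₁ Θ₂ θ₁ θ₂ : ℝ → ℝ)
    (hΘ₂ : IsYoung Θ₂)
    (hp : prec Θ₁ Θ₂) (hi : invLesssim Θ₁ Θ₂)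
    (hθ₂ : Gclass n Θ₂ θ₂)
    (C₀ : ℝ) (hC₀ : 0 < C₀) (hθ : ∀ t : ℝ, 0 < t → θ₂ t ≤ C₀ * θ₁ t) :
    ∃ C : ℝ, 0 < C ∧ ∀ f : En n → ℝ, Measurable f →
      (wMorreyNorm n θ₁ Θ₁ f ≤ ENNReal.ofReal C * morreyNorm n θ₂ Θ₂ f) ∧
      (morreyNorm n θ₂ Θ₂ f ≠ ⊤ → wMorreyNorm n θ₁ Θ₁ f ≠ ⊤) := by
  obtain ⟨Cp, hCp, hprec⟩ := hp
  obtain ⟨Ci, hCi, hinv⟩ := hi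
  refine ⟨C₀ * Ci * Cp, by positivity, fun f hf => ?_⟩
  have hball_pos (a : En n) {r : ℝ} (hr : 0 < r) : 0 < (volume (ball a r)).toReal :=
    ENNReal.toReal_pos (measure_ball_pos volume a hr).ne' measure_ball_lt_top.ne
  have hmain : wMorreyNorm n θ₁ Θ₁ f ≤ ENNReal.ofReal (C₀ * Ci * Cp) * morreyNorm n θ₂ Θ₂ f :=
    wMorreyNorm_le_mul_morreyNorm (by positivity)
      (fun a r hr => morreyWeight_le hC₀ hθ₂.1 hθ hinv (hball_pos a hr))
      (fun a r _ => (wLuxNorm_le_mul_wLuxNorm hCp hprec _ f).trans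
        (mul_le_mul_right (wLuxNorm_le_luxNorm hΘ₂.monotoneOn measurableSet_ball hf) _))
  exact ⟨hmain, fun hfin => ne_top_of_le_ne_top (mul_ne_top ofReal_ne_top hfin) hmain⟩

theorem stmt15 (n : ℕ) (hn : 0 < n) (Θ₁ Θ₂ θ₁ θ₂ : ℝ → ℝ)
    (hΘ₁ : IsYoung Θ₁) (hΘ₂ : IsYoung Θ₂)
    (hp : prec Θ₁ Θ₂) (hi : invLesssim Θ₁ Θ₂)
    (hθ₁ : Gclass n Θ₁ θ₁) (hθ₂ : Gclass n Θ₂ θ₂)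
    (C₀ : ℝ) (hC₀ : 0 < C₀) (hθ : ∀ t : ℝ, 0 < t → θ₂ t ≤ C₀ * θ₁ t) :
    ∃ C : ℝ, 0 < C ∧ ∀ f : En n → ℝ, Measurable f →
      (wMorreyNorm n θ₁ Θ₁ f ≤ ENNReal.ofReal C * morreyNorm n θ₂ Θ₂ f) ∧
      (morreyNorm n θ₂ Θ₂ f ≠ ⊤ → wMorreyNorm n θ₁ Θ₁ f ≠ ⊤) :=
  stmt15_general n Θ₁ Θ₂ θ₁ θ₂ hΘ₂ hp hi hθ₂ C₀ hC₀ hθ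
end
end

section
/- Let Θ be a Young function with generalized inverse Θ⁻¹(s) = inf{r ≥ 0 : Θ(r) > s}, and let B(a,r) ⊂ ℝⁿ and B(0,r₀) ⊂ ℝⁿ be balls with |B(a,r) ∩ B(0,r₀)| > 0. Then ‖χ_{B(0,r₀)}‖_{wL_Θ(B(a,r))} = 1 / Θ⁻¹( 1 / |B(a,r) ∩ B(0,r₀)| ), where ‖·‖_{wL_Θ(B(a,r))} is the weak Luxemburg quasi-norm restricted to B(a,r). -/
open MeasureTheory Metric Set ENNReal

noncomputable section

/-! The level sets `{x ∈ B : χ_E(x)/b > t}` are `B ∩ E` for `t < 1/b` and empty otherwise, so `b` is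
admissible exactly when `Θ t ≤ 1/|B ∩ E|` for all `t < 1/b`, i.e. when `1/b ≤ Θ⁻¹(1/|B ∩ E|)`.
The last equivalence uses that a Young function is monotone and continuous, with `Θ⁻¹ > 0`. -/

open Topology Filter

namespace IsYoung

variable {Θ : ℝ → ℝ}

theorem monotoneOn_s16 (hΘ : IsYoung Θ) : MonotoneOn Θ (Ici 0) := by
  obtain ⟨hconv, -, h0, hnn, -⟩ := hΘ
  intro x hx y hy hxy
  rcases (mem_Ici.mp hy).eq_or_lt with rfl | hy0
  · rw [le_antisymm hxy hx]
  · set t := x / y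
    have ht0 : 0 ≤ t := div_nonneg hx hy0.le
    have ht1 : t ≤ 1 := (div_le_one hy0).mpr hxy
    have hx_eq : (1 - t) • (0 : ℝ) + t • y = x := by
      simp [t, smul_eq_mul, div_mul_cancel₀ x hy0.ne']
    calc Θ x = Θ ((1 - t) • (0 : ℝ) + t • y) := by rw [hx_eq]
      _ ≤ (1 - t) * Θ 0 + t * Θ y := hconv.2 self_mem_Ici hy (by linarith) ht0 (by ring)
      _ = t * Θ y := by rw [h0]; ring
      _ ≤ Θ y := mul_le_of_le_one_left (hnn y hy) ht1

theorem nonempty_setOf_lt (hΘ : IsYoung Θ) (s : ℝ) : {r : ℝ | 0 ≤ r ∧ s < Θ r}.Nonempty :=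
  ((hΘ.2.2.2.2.eventually_gt_atTop s).and (eventually_ge_atTop 0)).exists.imp
    fun _ h ↦ ⟨h.2, h.1⟩

theorem le_invY (hΘ : IsYoung Θ) {s c : ℝ} (hc : 0 ≤ c) (h : Θ c ≤ s) : c ≤ invY Θ s :=
  le_csInf (hΘ.nonempty_setOf_lt s) fun _ ⟨hx0, hxs⟩ ↦
    le_of_not_gt fun hxc ↦ (hΘ.monotoneOn_s16 hx0 hc hxc.le).not_gt (h.trans_lt hxs)

/-- By continuity at `c > 0`: if `Θ c > s`, then already some `x < c` has `Θ x > s`. -/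
theorem apply_le_of_le_invY (hΘ : IsYoung Θ) {s c : ℝ} (hc : 0 < c) (h : c ≤ invY Θ s) :
    Θ c ≤ s := by
  by_contra! hgt
  have hca : ContinuousAt Θ c := hΘ.2.1.continuousAt (Ici_mem_nhds hc)
  have hnear : ∀ᶠ x in 𝓝[<] c, s < Θ x ∧ 0 < x ∧ x < c :=
    ((hca.eventually (eventually_gt_nhds hgt)).and (eventually_gt_nhds hc)).filter_mono
      nhdsWithin_le_nhds |>.and eventually_mem_nhdsWithin |>.mono fun _ h ↦ ⟨h.1.1, h.1.2, h.2⟩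
  obtain ⟨x, hxs, hx0, hxc⟩ := hnear.exists
  have : invY Θ s ≤ x := csInf_le ⟨0, fun _ hy ↦ hy.1⟩ ⟨hx0.le, hxs⟩
  linarith

theorem invY_pos (hΘ : IsYoung Θ) {s : ℝ} (hs : 0 < s) : 0 < invY Θ s := by
  have hsmall : ∀ᶠ x in 𝓝[Ici 0] (0 : ℝ), Θ x < s :=
    (hΘ.2.1 0 self_mem_Ici).eventually (eventually_lt_nhds (by rw [hΘ.2.2.1]; exact hs))
  obtain ⟨δ, hδ, hδs⟩ := Metric.mem_nhdsWithin_iff.mp hsmall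
  refine hδ.trans_le (le_csInf (hΘ.nonempty_setOf_lt s) fun x ⟨hx0, hxs⟩ ↦ ?_)
  by_contra! hxδ
  have hx : x ∈ Metric.ball 0 δ ∩ Ici 0 := ⟨by simpa [abs_of_nonneg hx0] using hxδ, hx0⟩
  exact (hδs hx).not_gt hxs

theorem forall_lt_apply_le_iff (hΘ : IsYoung Θ) {s : ℝ} (hs : 0 < s) (c : ℝ) :
    (∀ t, 0 < t → t < c → Θ t ≤ s) ↔ c ≤ invY Θ s := by
  refine ⟨fun h ↦ ?_, fun h t ht htc ↦ hΘ.apply_le_of_le_invY ht (htc.le.trans h)⟩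
  by_contra! hlt
  have hI := hΘ.invY_pos hs
  have := hΘ.le_invY (by linarith) (h ((invY Θ s + c) / 2) (by linarith) (by linarith))
  linarith

end IsYoung

theorem ENNReal.ofReal_mul_le_one_iff {V : ℝ≥0∞} (hV0 : V ≠ 0) (hV : V ≠ ⊤) (x : ℝ) :
    ENNReal.ofReal x * V ≤ 1 ↔ x ≤ 1 / V.toReal := by
  rw [← ENNReal.le_div_iff_mul_le (Or.inl hV0) (Or.inl hV),
    ENNReal.ofReal_le_iff_le_toReal (ENNReal.div_lt_top one_ne_top hV0).ne,
    ENNReal.toReal_div, ENNReal.toReal_one]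

theorem ENNReal.sInf_ofReal_eq_of_iff {P : ℝ → Prop} {c : ℝ} (hc : 0 < c)
    (hP : ∀ b, 0 < b → (P b ↔ c ≤ b)) :
    sInf {e : ℝ≥0∞ | ∃ b : ℝ, 0 < b ∧ e = ENNReal.ofReal b ∧ P b} = ENNReal.ofReal c := by
  refine le_antisymm (sInf_le ⟨c, hc, rfl, (hP c hc).mpr le_rfl⟩) (le_sInf ?_)
  rintro _ ⟨b, hb, rfl, hPb⟩
  exact ENNReal.ofReal_le_ofReal ((hP b hb).mp hPb)

theorem setOf_mem_lt_abs_indicator_one_div {α : Type*} (B E : Set α) {b t : ℝ} (ht : 0 < t) :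
    {x ∈ B | t < |E.indicator (fun _ ↦ (1 : ℝ)) x| / b} = if t < 1 / b then B ∩ E else ∅ := by
  ext x
  by_cases hx : x ∈ E <;> split_ifs with htb <;> simp [hx, htb, ht.not_gt, -one_div]

theorem wLuxNorm_indicator_one {n : ℕ} {Θ : ℝ → ℝ} (hΘ : IsYoung Θ) (B E : Set (En n))
    (hpos : 0 < volume (B ∩ E)) (hfin : volume (B ∩ E) ≠ ⊤) :
    wLuxNorm Θ B (E.indicator fun _ ↦ (1 : ℝ)) =
      ENNReal.ofReal (1 / invY Θ (1 / (volume (B ∩ E)).toReal)) := by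
  set s := 1 / (volume (B ∩ E)).toReal
  have hs : 0 < s := one_div_pos.mpr (ENNReal.toReal_pos hpos.ne' hfin)
  have hI := hΘ.invY_pos hs
  refine ENNReal.sInf_ofReal_eq_of_iff (one_div_pos.mpr hI) fun b hb ↦ ?_
  calc (∀ t : ℝ, 0 < t → ENNReal.ofReal (Θ t) *
          volume {x ∈ B | t < |E.indicator (fun _ ↦ (1 : ℝ)) x| / b} ≤ 1)
      ↔ ∀ t, 0 < t → t < 1 / b → Θ t ≤ s := by
        refine forall₂_congr fun t ht ↦ ?_
        rw [setOf_mem_lt_abs_indicator_one_div B E ht]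
        split_ifs with htb
        · simp [htb, ENNReal.ofReal_mul_le_one_iff hpos.ne' hfin, s, -one_div]
        · simp [htb, -one_div]
    _ ↔ 1 / b ≤ invY Θ s := hΘ.forall_lt_apply_le_iff hs _
    _ ↔ 1 / invY Θ s ≤ b := one_div_le hb hI

theorem stmt16_general (n : ℕ) (Θ : ℝ → ℝ) (hΘ : IsYoung Θ)
    (a : En n) (r r₀ : ℝ)
    (hpos : 0 < volume (ball a r ∩ ball (0:En n) r₀)) :
    wLuxNorm Θ (ball a r) ((ball (0:En n) r₀).indicator (fun _ => (1:ℝ))) =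
      ENNReal.ofReal (1 / invY Θ (1 / (volume (ball a r ∩ ball (0:En n) r₀)).toReal)) :=
  wLuxNorm_indicator_one hΘ _ _ hpos
    (measure_lt_top_mono inter_subset_left measure_ball_lt_top).ne

theorem stmt16 (n : ℕ) (hn : 0 < n) (Θ : ℝ → ℝ) (hΘ : IsYoung Θ)
    (a : En n) (r r₀ : ℝ) (hr : 0 < r) (hr₀ : 0 < r₀)
    (hpos : 0 < volume (ball a r ∩ ball (0:En n) r₀)) :
    wLuxNorm Θ (ball a r) ((ball (0:En n) r₀).indicator (fun _ => (1:ℝ))) =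
      ENNReal.ofReal (1 / invY Θ (1 / (volume (ball a r ∩ ball (0:En n) r₀)).toReal)) :=
  stmt16_general n Θ hΘ a r r₀ hpos
end
end
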